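/- Fix an integer d ≥ 2. There exist K ≥ 1 and ε_0 > 0 such that for every ε ∈ (0,ε_0) there exists δ_0 > 0 with the following property for all δ ∈ (0,δ_0). Let A ⊆ [0,1]^d be a compact set with vol_d(A) ≥ δ^{d/2+ε}, and suppose that for every 1 ≤ j ≤ d the projection π^j(A) ⊆ ℝ^{d−1} obtained by deleting the j-th coordinate satisfies vol_{d−1}(π^j(A)) ≤ δ^{(d−1)/2 − ε}. Then there exists a compact A' ⊆ A with vol_d(A') ≥ δ^{Kε}·vol_d(A) such that for every 1 ≤ j ≤ d the coordinate projection π_j(A') ⊆ ℝ (the set of j-th coordinates of points of A') satisfies vol_1(π_j(A')) ≤ δ^{1/2 − Kε}. -/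

import Mathlib

open MeasureTheory Metric Set
open scoped ENNReal

noncomputable section

abbrev Euc (d : ℕ) : Type := EuclideanSpace ℝ (Fin d)

/-- The index map realizing the projection deleting the `j`-th coordinate:
`delIdx j i` is `i` if `i < j` and `i+1` otherwise. -/
def delIdx {d : ℕ} (j : Fin d) (i : Fin (d - 1)) : Fin d :=
  if i.val < j.val then ⟨i.val, by have := i.isLt; omega⟩
  else ⟨i.val + 1, by have := i.isLt; omega⟩

/-- The projection `ℝ^d → ℝ^{d-1}` deleting the `j`-th coordinate. -/
def delProj {d : ℕ} (j : Fin d) (x : Euc d) : Euc (d - 1) :=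
  WithLp.toLp 2 (fun i => x (delIdx j i))

/-!
Applying the Loomis–Whitney inequality slice by slice shows that the points `x ∈ A` whose
hyperplane section `{y ∈ A | y_j = x_j}` has `(d-1)`-volume below `τ` occupy volume at most
`(τ M^{d-1})^{1/(d-1)}`, where `M` bounds the volumes of the projections `π^j A`. For
`τ = (vol A / 2dM)^{d-1}` these light points fill at most half of `A`. On the remaining heavy
part every coordinate value `s = x_j` carries a section of volume `≥ τ`, so by Fubini and Markov
the set of such `s` has measure at most `vol A / τ = (2dM)^{d-1} / (vol A)^{d-2}`, which is
`δ^{1/2 - O(ε)}` under the hypotheses. A compact subset of the heavy part carrying a quarter of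
the volume of `A` is the required `A'`.
-/

open Filter Topology

def coordSlice {m : ℕ} (j : Fin (m + 1)) (s : ℝ) (C : Set (Fin (m + 1) → ℝ)) :
    Set (Fin m → ℝ) :=
  (fun y => j.insertNth s y) ⁻¹' C

section CoordSlice

variable {m : ℕ}

lemma coordSlice_subset_image_removeNth (j : Fin (m + 1)) (s : ℝ)
    (C : Set (Fin (m + 1) → ℝ)) :
    coordSlice j s C ⊆ j.removeNth '' C :=
  fun y hy => ⟨_, hy, Fin.removeNth_insertNth (α := fun _ => ℝ) j s y⟩

lemma continuous_removeNth (j : Fin (m + 1)) :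
    Continuous (j.removeNth : (Fin (m + 1) → ℝ) → Fin m → ℝ) :=
  continuous_pi fun _ => continuous_apply _

lemma IsCompact.coordSlice {C : Set (Fin (m + 1) → ℝ)} (hC : IsCompact C) (j : Fin (m + 1))
    (s : ℝ) : IsCompact (coordSlice j s C) :=
  (hC.image (continuous_removeNth j)).of_isClosed_subset
    (hC.isClosed.preimage (continuous_const.finInsertNth j continuous_id))
    (coordSlice_subset_image_removeNth j s C)

lemma volume_eq_lintegral_volume_coordSlice (j : Fin (m + 1)) {C : Set (Fin (m + 1) → ℝ)}
    (hC : MeasurableSet C) : volume C = ∫⁻ s, volume (coordSlice j s C) := by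
  have e := (volume_preserving_piFinSuccAbove (fun _ : Fin (m + 1) => ℝ) j).symm
  rw [← e.measure_preimage hC.nullMeasurableSet, Measure.volume_eq_prod,
    Measure.prod_apply (hC.preimage e.measurable)]
  rfl

lemma measurable_volume_coordSlice (j : Fin (m + 1)) {C : Set (Fin (m + 1) → ℝ)}
    (hC : MeasurableSet C) : Measurable fun s => volume (coordSlice j s C) :=
  measurable_measure_prodMk_left
    (hC.preimage (MeasurableEquiv.piFinSuccAbove (fun _ => ℝ) j).symm.measurable)

lemma image_removeNth_coordSlice_subset (j : Fin (m + 2)) (i : Fin (m + 1)) (s : ℝ)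
    (C : Set (Fin (m + 2) → ℝ)) :
    i.removeNth '' coordSlice j s C ⊆
      coordSlice (i.predAbove j) s ((j.succAbove i).removeNth '' C) := by
  rintro _ ⟨y, hy, rfl⟩
  refine ⟨j.insertNth s y, hy, ?_⟩
  rw [← Fin.insertNth_self_removeNth (i.predAbove j) ((j.succAbove i).removeNth _),
    ← Fin.removeNth_removeNth_eq_swap, Fin.removeNth_insertNth]
  simp [Fin.removeNth, Fin.succAbove_succAbove_predAbove]

end CoordSlice

lemma lintegral_pow_le_mul_prod_lintegral {α : Type*} [MeasurableSpace α] {μ : Measure α}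
    {n : ℕ} (hn : n ≠ 0) {f : α → ℝ≥0∞} {g : Fin n → α → ℝ≥0∞}
    (hg : ∀ i, AEMeasurable (g i) μ) {M : ℝ≥0∞} (hM : M ≠ ∞)
    (hfg : ∀ a, f a ^ n ≤ M * ∏ i, g i a) :
    (∫⁻ a, f a ∂μ) ^ n ≤ M * ∏ i, ∫⁻ a, g i a ∂μ := by
  set p : ℝ := (n : ℝ)⁻¹
  have hp : 0 ≤ p := by positivity
  have hroot : ∀ x : ℝ≥0∞, (x ^ p) ^ n = x := ENNReal.rpow_inv_natCast_pow hn
  have hf : ∀ a, f a ≤ M ^ p * ∏ i, g i a ^ p := fun a => by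
    rw [ENNReal.prod_rpow_of_nonneg hp, ← ENNReal.mul_rpow_of_nonneg _ _ hp,
      ← ENNReal.pow_rpow_inv_natCast hn (f a)]
    exact ENNReal.rpow_le_rpow (hfg a) hp
  have holder : ∫⁻ a, ∏ i, g i a ^ p ∂μ ≤ ∏ i, (∫⁻ a, g i a ∂μ) ^ p :=
    ENNReal.lintegral_prod_norm_pow_le _ (fun i _ => hg i)
      (by simp [p, hn]) (fun _ _ => hp)
  calc (∫⁻ a, f a ∂μ) ^ n ≤ (M ^ p * ∏ i, (∫⁻ a, g i a ∂μ) ^ p) ^ n := by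
        gcongr
        calc ∫⁻ a, f a ∂μ ≤ ∫⁻ a, M ^ p * ∏ i, g i a ^ p ∂μ := lintegral_mono hf
          _ = M ^ p * ∫⁻ a, ∏ i, g i a ^ p ∂μ :=
            lintegral_const_mul' _ _ (ENNReal.rpow_ne_top_of_nonneg hp hM)
          _ ≤ M ^ p * ∏ i, (∫⁻ a, g i a ∂μ) ^ p := by gcongr
    _ = M * ∏ i, ∫⁻ a, g i a ∂μ := by simp only [mul_pow, ← Finset.prod_pow, hroot]

theorem volume_inter_preimage_pow_le_mul_prod {m : ℕ}
    (hLW : ∀ B : Set (Fin (m + 1) → ℝ), IsCompact B → B.Nonempty →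
      volume B ^ m ≤ ∏ i, volume (Fin.removeNth i '' B))
    {A : Set (Fin (m + 2) → ℝ)} (hA : IsCompact A) (j : Fin (m + 2)) {E : Set ℝ}
    (hE : MeasurableSet E) {M : ℝ≥0∞} (hM : M ≠ ∞)
    (hAE : ∀ s ∈ E, volume (coordSlice j s A) ≤ M) :
    volume (A ∩ (fun x => x j) ⁻¹' E) ^ (m + 1) ≤
      M * ∏ i : Fin (m + 1), volume ((j.succAbove i).removeNth '' A) := by
  have hproj : ∀ k : Fin (m + 2), MeasurableSet (k.removeNth '' A) := fun k =>
    (hA.image (continuous_removeNth k)).isClosed.measurableSet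
  rw [volume_eq_lintegral_volume_coordSlice j
    (hA.isClosed.measurableSet.inter (hE.preimage (measurable_pi_apply j)))]
  have hfiber : ∀ i : Fin (m + 1), volume (Fin.removeNth (j.succAbove i) '' A) =
      ∫⁻ s, volume (coordSlice (i.predAbove j) s (Fin.removeNth (j.succAbove i) '' A)) :=
    fun i => volume_eq_lintegral_volume_coordSlice _ (hproj _)
  simp_rw [hfiber]
  refine lintegral_pow_le_mul_prod_lintegral m.succ_ne_zero
    (fun i => (measurable_volume_coordSlice _ (hproj _)).aemeasurable) hM fun s => ?_
  by_cases hs : s ∈ E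
  swap
  · have : coordSlice j s (A ∩ (fun x => x j) ⁻¹' E) = ∅ := by
      ext y; simp [coordSlice, hs]
    simp [this]
  have hsl : coordSlice j s (A ∩ (fun x => x j) ⁻¹' E) = coordSlice j s A := by
    ext y; simp [coordSlice, hs]
  rw [hsl]
  rcases (coordSlice j s A).eq_empty_or_nonempty with h | h
  · simp [h]
  rw [pow_succ']
  gcongr
  · exact hAE s hs
  · exact (hLW _ (hA.coordSlice j s) h).trans
      (Finset.prod_le_prod' fun i _ => measure_mono (image_removeNth_coordSlice_subset j i s A))

theorem volume_pow_le_prod_volume_image_removeNth :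
    ∀ m : ℕ, ∀ B : Set (Fin (m + 1) → ℝ), IsCompact B → B.Nonempty →
      volume B ^ m ≤ ∏ i, volume (Fin.removeNth i '' B)
  | 0, B, _, hB => by
    rw [pow_zero, Fin.prod_univ_one, (hB.image _).eq_univ]
    simp [volume_pi]
  | m + 1, B, hB, _ => by
    simpa [Fin.prod_univ_succAbove _ 0] using
      volume_inter_preimage_pow_le_mul_prod (volume_pow_le_prod_volume_image_removeNth m) hB 0
        MeasurableSet.univ (hB.image (continuous_removeNth 0)).measure_lt_top.ne
        fun s _ => measure_mono (coordSlice_subset_image_removeNth 0 s B)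

def heavyPart {m : ℕ} (τ : ℝ≥0∞) (A : Set (Fin (m + 1) → ℝ)) :
    Set (Fin (m + 1) → ℝ) :=
  A ∩ ⋂ j, (fun x => x j) ⁻¹' {s | τ ≤ volume (coordSlice j s A)}

def lightPart {m : ℕ} (τ : ℝ≥0∞) (A : Set (Fin (m + 1) → ℝ)) (j : Fin (m + 1)) :
    Set (Fin (m + 1) → ℝ) :=
  A ∩ (fun x => x j) ⁻¹' {s | volume (coordSlice j s A) < τ}

section HeavyPart

variable {m : ℕ} {τ : ℝ≥0∞} {A : Set (Fin (m + 1) → ℝ)}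

lemma MeasurableSet.heavyPart (hA : MeasurableSet A) : MeasurableSet (heavyPart τ A) :=
  hA.inter (.iInter fun j => measurable_pi_apply j
    (measurableSet_le measurable_const (measurable_volume_coordSlice j hA)))

lemma mul_volume_image_heavyPart_le (hA : MeasurableSet A) (j : Fin (m + 1)) :
    τ * volume ((fun x => x j) '' heavyPart τ A) ≤ volume A := by
  have hsub : (fun x => x j) '' heavyPart τ A ⊆ {s | τ ≤ volume (coordSlice j s A)} := by
    rintro _ ⟨x, hx, rfl⟩
    exact mem_iInter.1 hx.2 j
  calc τ * volume ((fun x => x j) '' heavyPart τ A)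
      ≤ τ * volume {s | τ ≤ volume (coordSlice j s A)} := by gcongr
    _ ≤ ∫⁻ s, volume (coordSlice j s A) :=
      mul_meas_ge_le_lintegral₀ (measurable_volume_coordSlice j hA).aemeasurable τ
    _ = volume A := (volume_eq_lintegral_volume_coordSlice j hA).symm

lemma volume_le_volume_heavyPart_add_sum_lightPart :
    volume A ≤ volume (heavyPart τ A) + ∑ j, volume (lightPart τ A j) := by
  have hcover : A ⊆ heavyPart τ A ∪ ⋃ j, lightPart τ A j := by
    intro x hx
    by_cases h : ∀ j, τ ≤ volume (coordSlice j (x j) A)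
    · exact Or.inl ⟨hx, mem_iInter.2 h⟩
    · obtain ⟨j, hj⟩ := not_forall.1 h
      exact Or.inr (mem_iUnion.2 ⟨j, hx, not_le.1 hj⟩)
  calc volume A ≤ volume (heavyPart τ A ∪ ⋃ j, lightPart τ A j) := measure_mono hcover
    _ ≤ _ := (measure_union_le _ _).trans (by gcongr; exact measure_iUnion_fintype_le _ _)

end HeavyPart

lemma volume_lightPart_pow_le {n : ℕ} {A : Set (Fin (n + 2) → ℝ)} (hA : IsCompact A)
    {τ : ℝ≥0∞} (hτ : τ ≠ ∞) (j : Fin (n + 2)) :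
    volume (lightPart τ A j) ^ (n + 1) ≤
      τ * ∏ i : Fin (n + 1), volume (Fin.removeNth (j.succAbove i) '' A) :=
  volume_inter_preimage_pow_le_mul_prod (volume_pow_le_prod_volume_image_removeNth n) hA j
    (measurableSet_lt (measurable_volume_coordSlice j hA.isClosed.measurableSet)
      measurable_const) hτ fun _ hs => le_of_lt hs

theorem volume_le_two_mul_volume_heavyPart {n : ℕ} {A : Set (Fin (n + 2) → ℝ)}
    (hA : IsCompact A) {M τ : ℝ≥0∞} (hM : ∀ j, volume (Fin.removeNth j '' A) ≤ M)
    (hτ : τ ≠ ∞) (hτM : τ * (2 * (n + 2) * M) ^ (n + 1) ≤ volume A ^ (n + 1)) :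
    volume A ≤ 2 * volume (heavyPart τ A) := by
  have hlight (j : Fin (n + 2)) : 2 * (n + 2) * volume (lightPart τ A j) ≤ volume A := by
    rw [← ENNReal.pow_le_pow_left_iff n.succ_ne_zero]
    refine le_trans ?_ hτM
    rw [mul_pow, mul_pow _ M, mul_left_comm]
    gcongr
    refine (volume_lightPart_pow_le hA hτ j).trans ?_
    gcongr
    exact (Finset.prod_le_prod' fun i _ => hM _).trans (by simp)
  have hsum : 2 * ∑ j, volume (lightPart τ A j) ≤ volume A := by
    have h := Finset.sum_le_sum fun j (_ : j ∈ Finset.univ) => hlight j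
    rw [← Finset.mul_sum, Finset.sum_const, Finset.card_univ, Fintype.card_fin, nsmul_eq_mul,
      mul_assoc, mul_left_comm] at h
    push_cast at h
    exact (ENNReal.mul_le_mul_iff_right (by positivity) (by simp)).1 h
  have hVtop : volume A ≠ ∞ := hA.measure_lt_top.ne
  rw [← ENNReal.add_le_add_iff_right hVtop]
  calc volume A + volume A = 2 * volume A := (two_mul _).symm
    _ ≤ 2 * (volume (heavyPart τ A) + ∑ j, volume (lightPart τ A j)) := by
      gcongr; exact volume_le_volume_heavyPart_add_sum_lightPart
    _ ≤ 2 * volume (heavyPart τ A) + volume A := by rw [mul_add]; gcongr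

theorem exists_isCompact_subset_volume_image_coord_le {n : ℕ} {A : Set (Fin (n + 2) → ℝ)}
    (hA : IsCompact A) (hA0 : volume A ≠ 0) {M : ℝ≥0∞} (hM0 : M ≠ 0) (hMtop : M ≠ ∞)
    (hM : ∀ j, volume (Fin.removeNth j '' A) ≤ M) :
    ∃ A' ⊆ A, IsCompact A' ∧ volume A ≤ 4 * volume A' ∧
      ∀ j, volume ((fun x => x j) '' A') * volume A ^ n ≤ (2 * (n + 2) * M) ^ (n + 1) := by
  set V := volume A
  have hVtop : V ≠ ∞ := hA.measure_lt_top.ne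
  set c : ℝ≥0∞ := 2 * (n + 2) * M
  have hc0 : c ≠ 0 := by positivity
  have hctop : c ≠ ∞ := by finiteness
  set τ := (V / c) ^ (n + 1)
  have hτc : τ * c ^ (n + 1) = V ^ (n + 1) := by
    rw [← mul_pow, ENNReal.div_mul_cancel hc0 hctop]
  have hheavy := volume_le_two_mul_volume_heavyPart hA hM (by finiteness) hτc.le
  have hS0 : volume (heavyPart τ A) ≠ 0 := fun h => hA0 (by simpa [h] using hheavy)
  have hStop : volume (heavyPart τ A) ≠ ∞ :=
    ne_top_of_le_ne_top hVtop (measure_mono inter_subset_left)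
  obtain ⟨A', hA'S, hA', hlt⟩ :=
    hA.isClosed.measurableSet.heavyPart.exists_lt_isCompact_of_ne_top hStop
      (ENNReal.half_lt_self hS0 hStop)
  refine ⟨A', hA'S.trans inter_subset_left, hA', ?_, fun j => ?_⟩
  · rw [ENNReal.div_lt_iff (by simp) (by simp)] at hlt
    calc V ≤ 2 * volume (heavyPart τ A) := hheavy
      _ ≤ 2 * (volume A' * 2) := by gcongr
      _ = 4 * volume A' := by ring
  · have hmarkov : τ * volume ((fun x => x j) '' A') ≤ V :=
      (mul_volume_image_heavyPart_le hA.isClosed.measurableSet j).trans' (by gcongr)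
    rw [← ENNReal.mul_le_mul_iff_right hA0 hVtop]
    calc V * (volume ((fun x => x j) '' A') * V ^ n)
        = τ * volume ((fun x => x j) '' A') * c ^ (n + 1) := by
          rw [mul_right_comm, hτc]; ring
      _ ≤ V * c ^ (n + 1) := by gcongr

lemma volume_image_ofLp {ι : Type*} [Fintype ι] (S : Set (EuclideanSpace ℝ ι)) :
    volume (WithLp.ofLp '' S) = volume S := by
  rw [← (EuclideanSpace.volume_preserving_symm_measurableEquiv_toLp ι).measure_preimage_equiv]
  congr 1
  exact preimage_image_eq S (WithLp.equiv 2 (ι → ℝ)).injective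

lemma delIdx_eq_succAbove {n : ℕ} (j : Fin (n + 1)) : delIdx (d := n + 1) j = j.succAbove := by
  funext i
  apply Fin.ext
  simp only [delIdx, Fin.succAbove, Fin.lt_def, Fin.val_castSucc]
  split_ifs <;> simp

lemma image_ofLp_image_delProj {n : ℕ} (j : Fin (n + 1)) (S : Set (Euc (n + 1))) :
    WithLp.ofLp '' (delProj j '' S) = j.removeNth '' (WithLp.ofLp '' S) := by
  simp only [image_image, delProj, delIdx_eq_succAbove]
  rfl

lemma le_ofReal_div_pow_of_mul_pow_le {x V : ℝ≥0∞} {a b : ℝ} {n : ℕ} (hb : 0 < b)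
    (hV : ENNReal.ofReal b ≤ V) (hx : x * V ^ n ≤ ENNReal.ofReal a) :
    x ≤ ENNReal.ofReal (a / b ^ n) := by
  rw [ENNReal.ofReal_div_of_pos (by positivity), ENNReal.ofReal_pow hb.le,
    ENNReal.le_div_iff_mul_le (by simp [hb]) (by simp)]
  exact le_trans (by gcongr) hx

theorem exists_isCompact_subset_volume_image_coord_le_of_volume_delProj_le {n : ℕ}
    {A : Set (Euc (n + 2))} (hA : IsCompact A) {m v : ℝ} (hm : 0 < m) (hv : 0 < v)
    (hM : ∀ j, volume (delProj j '' A) ≤ ENNReal.ofReal m)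
    (hV : ENNReal.ofReal v ≤ volume A) :
    ∃ A' ⊆ A, IsCompact A' ∧ volume A ≤ 4 * volume A' ∧
      ∀ j, volume ((fun x : Euc (n + 2) => x j) '' A') ≤
        ENNReal.ofReal ((2 * ((n + 2 : ℕ) : ℝ) * m) ^ (n + 1) / v ^ n) := by
  obtain ⟨B, hBA, hB, hvol, hcoord⟩ := exists_isCompact_subset_volume_image_coord_le
    (hA.image (PiLp.continuous_ofLp 2 _))
    (by rw [volume_image_ofLp]; exact ((ENNReal.ofReal_pos.2 hv).trans_le hV).ne')
    (ENNReal.ofReal_pos.2 hm).ne' ENNReal.ofReal_ne_top fun j => by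
      have := hM j
      rwa [← volume_image_ofLp, image_ofLp_image_delProj] at this
  have hB' : WithLp.ofLp '' (WithLp.toLp 2 '' B) = B := by simp [image_image]
  have hconst : (2 * (n + 2) * ENNReal.ofReal m) ^ (n + 1) =
      ENNReal.ofReal ((2 * ((n + 2 : ℕ) : ℝ) * m) ^ (n + 1)) := by
    rw [ENNReal.ofReal_pow (by positivity), ENNReal.ofReal_mul (by positivity),
      ENNReal.ofReal_mul (by norm_num), ENNReal.ofReal_natCast]
    simp
  refine ⟨WithLp.toLp 2 '' B, ?_, hB.image (PiLp.continuous_toLp 2 _), ?_, fun j => ?_⟩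
  · rintro _ ⟨x, hx, rfl⟩
    obtain ⟨y, hy, rfl⟩ := hBA hx
    simpa using hy
  · rw [← volume_image_ofLp A, ← volume_image_ofLp (WithLp.toLp 2 '' B), hB']
    exact hvol
  · refine le_ofReal_div_pow_of_mul_pow_le hv hV ?_
    rw [← volume_image_ofLp A, image_image, ← hconst]
    exact hcoord j

lemma eventually_rpow_le {a c : ℝ} (ha : 0 < a) (hc : 0 < c) :
    ∀ᶠ δ in 𝓝[>] 0, δ ^ a ≤ c := by
  have h : Tendsto (fun δ : ℝ => δ ^ a) (𝓝[>] 0) (𝓝 0) := by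
    simpa [Real.zero_rpow ha.ne'] using
      (Real.continuousAt_rpow_const 0 a (Or.inr ha.le)).tendsto.mono_left nhdsWithin_le_nhds
  exact h.eventually (eventually_le_nhds hc)

lemma eventually_refinement_exponents (n : ℕ) {ε : ℝ} (hε : 0 < ε) :
    ∀ᶠ δ in 𝓝[>] 0, δ ^ (2 * ((n + 2 : ℕ) : ℝ) * ε) ≤ 4⁻¹ ∧
      (2 * ((n + 2 : ℕ) : ℝ) * δ ^ ((((n + 2 : ℕ) : ℝ) - 1) / 2 - ε)) ^ (n + 1) /
          (δ ^ (((n + 2 : ℕ) : ℝ) / 2 + ε)) ^ n ≤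
        δ ^ ((1 : ℝ) / 2 - 2 * ((n + 2 : ℕ) : ℝ) * ε) := by
  set d : ℝ := ((n + 2 : ℕ) : ℝ)
  filter_upwards
    [eventually_rpow_le (by positivity : 0 < 2 * d * ε) (by norm_num : (0 : ℝ) < 4⁻¹),
    eventually_rpow_le (by positivity : 0 < 3 * ε) (by positivity : 0 < ((2 * d) ^ (n + 1))⁻¹),
    self_mem_nhdsWithin] with δ hquarter hsmall (hδ : 0 < δ)
  refine ⟨hquarter, ?_⟩
  have hconst : (2 * d) ^ (n + 1) * δ ^ (3 * ε) ≤ 1 := by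
    rwa [← le_div_iff₀' (by positivity), one_div]
  have hsplit : (2 * d * δ ^ ((d - 1) / 2 - ε)) ^ (n + 1) =
      (2 * d) ^ (n + 1) * δ ^ (3 * ε) *
        (δ ^ ((1 : ℝ) / 2 - 2 * d * ε) * (δ ^ (d / 2 + ε)) ^ n) := by
    rw [mul_pow, ← Real.rpow_mul_natCast hδ.le, ← Real.rpow_mul_natCast hδ.le, mul_assoc,
      ← Real.rpow_add hδ, ← Real.rpow_add hδ]
    congr 2
    simp only [d]
    push_cast
    ring
  rw [div_le_iff₀ (by positivity), hsplit]
  exact mul_le_of_le_one_left (by positivity) hconst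

/-- **Projection refinement (Lemma 2.6).** If `A ⊆ [0,1]^d` has measure about `δ^{d/2}`
and all its `(d-1)`-dimensional coordinate projections have measure at most about
`δ^{(d-1)/2}`, then a large-measure subset `A'` has all one-dimensional coordinate
projections of measure at most about `δ^{1/2}`. -/
theorem projection_refinement (d : ℕ) (hd : 2 ≤ d) :
    ∃ K : ℝ, 1 ≤ K ∧ ∃ ε₀ : ℝ, 0 < ε₀ ∧ ∀ ε : ℝ, 0 < ε → ε < ε₀ →
      ∃ δ₀ : ℝ, 0 < δ₀ ∧ ∀ δ : ℝ, 0 < δ → δ < δ₀ →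
      ∀ A : Set (Euc d),
        IsCompact A →
        A ⊆ {x : Euc d | ∀ i, x i ∈ Icc (0 : ℝ) 1} →
        ENNReal.ofReal (δ ^ ((d : ℝ) / 2 + ε)) ≤ volume A →
        (∀ j : Fin d,
          volume (delProj j '' A) ≤ ENNReal.ofReal (δ ^ (((d : ℝ) - 1) / 2 - ε))) →
        ∃ A' : Set (Euc d), A' ⊆ A ∧ IsCompact A' ∧
          ENNReal.ofReal (δ ^ (K * ε)) * volume A ≤ volume A' ∧
          ∀ j : Fin d,
            volume ((fun x : Euc d => x j) '' A')
              ≤ ENNReal.ofReal (δ ^ ((1 : ℝ) / 2 - K * ε)) := by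
  obtain ⟨n, rfl⟩ : ∃ n, d = n + 2 := ⟨d - 2, by omega⟩
  refine ⟨2 * ((n + 2 : ℕ) : ℝ), by push_cast; linarith, 1, one_pos, fun ε hε _ => ?_⟩
  obtain ⟨δ₀, hδ₀, hsmall⟩ :=
    mem_nhdsGT_iff_exists_Ioo_subset.1 (eventually_refinement_exponents n hε)
  refine ⟨δ₀, hδ₀, fun δ hδ hδδ₀ A hA _ hvol hproj => ?_⟩
  obtain ⟨hquarter, hexp⟩ := hsmall ⟨hδ, hδδ₀⟩
  obtain ⟨A', hA'A, hA', hvol', hcoord⟩ :=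
    exists_isCompact_subset_volume_image_coord_le_of_volume_delProj_le hA (by positivity)
      (by positivity) hproj hvol
  refine ⟨A', hA'A, hA', ?_, fun j => (hcoord j).trans (ENNReal.ofReal_le_ofReal hexp)⟩
  calc _ ≤ ENNReal.ofReal 4⁻¹ * (4 * volume A') := by gcongr
    _ = volume A' := by
      rw [ENNReal.ofReal_inv_of_pos four_pos, ENNReal.ofReal_ofNat, ← mul_assoc,
        ENNReal.inv_mul_cancel (by simp) (by simp), one_mul]

end
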